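/- For the Lamé operator L₂ = -d²/dx² + 6k² sn²(x,k) with 0<k<1, the edges of the first spectral gap are λ'₁ = 1 + k² and λ'₂ = 1 + 4k² (the roots of δ*_{1,1} = P*(0)+Λ*₀ and δ*_{1,2} = −P*(0)+Λ*₀), the edges of the second gap are λ₁ = 4 + k² (the root of Λ₁) and λ₂ = 2(1 + k² + √(1 − k² + k⁴)), and the bottom of the spectrum is λ₀ = 2(1 + k² − √(1 − k² + k⁴)) (the two roots of Λ₀Λ₁ − 2P(0)P(−1)). -/

import Mathlib

/-!
Each of the five numbers is an eigenvalue with an explicit eigenfunction: `sn² - 2/λ₀`,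
`sn · cn` and `sn² - 2/λ₂` are `2K`-periodic, `sn' = cn · dn` and `sn · dn` are
`2K`-antiperiodic. Conversely, write `sn = sin ∘ am` with `am (x + 2K) = am x + π`. By Sturm
comparison with `sn² - 2/λ₂`, a Floquet solution `ψ` below `λ₂` has at most two zeros per
period, and the signs of `ψ'` at consecutive zeros force exactly one zero per period when `ψ`
is antiperiodic and exactly two, `a` and `z`, when it is periodic. If `ψ` belonged to a new
eigenvalue it would be orthogonal to the explicit eigenfunctions, hence to `dn · sin (am - am a)`,
resp. `sin (am - am a) · sin (am - am z)`; but these have the sign of `ψ` between its zeros.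
So there is no other eigenvalue below `λ₂`, and the interlacing of the two enumerations
determines `λ₀, λ'₁, λ'₂, λ₁, λ₂`.
-/

open Set Filter

noncomputable section

/-- `sn` is the Jacobi elliptic sine with modulus `k`: characterised as the
unique solution of `sn'' = -(1+k²)sn + 2k² sn³` with `sn 0 = 0`, `sn' 0 = 1`. -/
def IsJacobiSn (k : ℝ) (sn : ℝ → ℝ) : Prop :=
  ContDiff ℝ 2 sn ∧ sn 0 = 0 ∧ deriv sn 0 = 1 ∧
    ∀ x : ℝ, deriv (deriv sn) x = -(1 + k ^ 2) * sn x + 2 * k ^ 2 * sn x ^ 3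

/-- The complete elliptic integral `K = ∫₀^{π/2} dφ/√(1 - k² sin²φ)`;
`2K` is the period of the Lamé potential `m(m+1)k² sn²(x,k)`. -/
def ellK (k : ℝ) : ℝ := ∫ φ in (0:ℝ)..(Real.pi / 2), 1 / Real.sqrt (1 - k ^ 2 * Real.sin φ ^ 2)

/-- The Lamé potential `q(x) = m(m+1)k² sn²(x,k)`. -/
def lamePot (m : ℕ) (k : ℝ) (sn : ℝ → ℝ) : ℝ → ℝ :=
  fun x => (m * (m + 1) : ℝ) * k ^ 2 * sn x ^ 2

/-- `ψ` is a nonzero solution of `-ψ'' + qψ = λψ` with `ψ(x+T) = s·ψ(x)`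
(`s = 1`: periodic; `s = -1`: antiperiodic). -/
def IsFloquetSolution (q : ℝ → ℝ) (T lam s : ℝ) (ψ : ℝ → ℝ) : Prop :=
  ψ ≠ 0 ∧ ContDiff ℝ 2 ψ ∧
    (∀ x : ℝ, -deriv (deriv ψ) x + q x * ψ x = lam * ψ x) ∧
    ∀ x : ℝ, ψ (x + T) = s * ψ x

/-- `λ` belongs to the `T`-periodic spectrum. -/
def IsPeriodicEV (q : ℝ → ℝ) (T lam : ℝ) : Prop :=
  ∃ ψ : ℝ → ℝ, IsFloquetSolution q T lam 1 ψ

/-- `λ` belongs to the `T`-antiperiodic spectrum. -/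
def IsAntiperiodicEV (q : ℝ → ℝ) (T lam : ℝ) : Prop :=
  ∃ ψ : ℝ → ℝ, IsFloquetSolution q T lam (-1) ψ

/-- Coexistence of two linearly independent `T`-periodic solutions at `λ`
(i.e. `λ` is a periodic eigenvalue of multiplicity 2). -/
def IsDoublePeriodicEV (q : ℝ → ℝ) (T lam : ℝ) : Prop :=
  ∃ ψ₁ ψ₂ : ℝ → ℝ, LinearIndependent ℝ ![ψ₁, ψ₂] ∧
    IsFloquetSolution q T lam 1 ψ₁ ∧ IsFloquetSolution q T lam 1 ψ₂

/-- Coexistence of two linearly independent `T`-antiperiodic solutions at `λ`. -/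
def IsDoubleAntiperiodicEV (q : ℝ → ℝ) (T lam : ℝ) : Prop :=
  ∃ ψ₁ ψ₂ : ℝ → ℝ, LinearIndependent ℝ ![ψ₁, ψ₂] ∧
    IsFloquetSolution q T lam (-1) ψ₁ ∧ IsFloquetSolution q T lam (-1) ψ₂

/-- `P(z) = m(m+1)k²/4 - zk²/2 - z²k²`. -/
def lameP (m : ℕ) (k z : ℝ) : ℝ :=
  (m * (m + 1) : ℝ) * k ^ 2 / 4 - z * k ^ 2 / 2 - z ^ 2 * k ^ 2

/-- `Λ_n = λ - m(m+1)k²/2 - (1 - k²/2)·4n²`. -/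
def lameL (m : ℕ) (k lam : ℝ) (n : ℕ) : ℝ :=
  lam - (m * (m + 1) : ℝ) * k ^ 2 / 2 - (1 - k ^ 2 / 2) * 4 * (n : ℝ) ^ 2

/-- `P*(z) = m(m+1)k²/4 - (2z-1)k²/4 - (2z-1)²k²/4`. -/
def lamePs (m : ℕ) (k z : ℝ) : ℝ :=
  (m * (m + 1) : ℝ) * k ^ 2 / 4 - (2 * z - 1) * k ^ 2 / 4 - (2 * z - 1) ^ 2 * k ^ 2 / 4

/-- `Λ*_n = λ - m(m+1)k²/2 - (1 - k²/2)(2n+1)²`. -/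
def lameLs (m : ℕ) (k lam : ℝ) (n : ℕ) : ℝ :=
  lam - (m * (m + 1) : ℝ) * k ^ 2 / 2 - (1 - k ^ 2 / 2) * (2 * (n : ℝ) + 1) ^ 2

/-- The `(ν+1)×(ν+1)` tridiagonal matrix `K_{ν,1}` with diagonal `Λ₀,…,Λ_ν`,
superdiagonal `P(-1),…,P(-ν)` and subdiagonal `2P(0), P(1),…,P(ν-1)`
(here `m = 2ν`). -/
def matK1 (ν : ℕ) (k lam : ℝ) : Matrix (Fin (ν + 1)) (Fin (ν + 1)) ℝ :=
  Matrix.of fun i j =>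
    if (i : ℕ) = (j : ℕ) then lameL (2 * ν) k lam (i : ℕ)
    else if (j : ℕ) = (i : ℕ) + 1 then lameP (2 * ν) k (-(((i : ℕ) : ℝ) + 1))
    else if (i : ℕ) = (j : ℕ) + 1 then
      (if (j : ℕ) = 0 then 2 * lameP (2 * ν) k 0 else lameP (2 * ν) k ((j : ℕ) : ℝ))
    else 0

/-- The `ν×ν` tridiagonal matrix `K_{ν,2}` with diagonal `Λ₁,…,Λ_ν`,
superdiagonal `P(-2),…,P(-ν)` and subdiagonal `P(1),…,P(ν-1)` (here `m = 2ν`). -/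
def matK2 (ν : ℕ) (k lam : ℝ) : Matrix (Fin ν) (Fin ν) ℝ :=
  Matrix.of fun i j =>
    if (i : ℕ) = (j : ℕ) then lameL (2 * ν) k lam ((i : ℕ) + 1)
    else if (j : ℕ) = (i : ℕ) + 1 then lameP (2 * ν) k (-(((i : ℕ) : ℝ) + 2))
    else if (i : ℕ) = (j : ℕ) + 1 then lameP (2 * ν) k (((j : ℕ) : ℝ) + 1)
    else 0

/-- The `ν×ν` tridiagonal matrix `K*_{ν,1}` with diagonal
`P*(0)+Λ*₀, Λ*₁,…,Λ*_{ν-1}`, superdiagonal `P*(-1),…,P*(-ν+1)` and subdiagonal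
`P*(1),…,P*(ν-1)` (here `m = 2ν`). -/
def matK1s (ν : ℕ) (k lam : ℝ) : Matrix (Fin ν) (Fin ν) ℝ :=
  Matrix.of fun i j =>
    if (i : ℕ) = (j : ℕ) then
      (if (i : ℕ) = 0 then lamePs (2 * ν) k 0 + lameLs (2 * ν) k lam 0
        else lameLs (2 * ν) k lam (i : ℕ))
    else if (j : ℕ) = (i : ℕ) + 1 then lamePs (2 * ν) k (-(((i : ℕ) : ℝ) + 1))
    else if (i : ℕ) = (j : ℕ) + 1 then lamePs (2 * ν) k (((j : ℕ) : ℝ) + 1)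
    else 0

/-- The `ν×ν` tridiagonal matrix `K*_{ν,2}`: identical to `K*_{ν,1}` except
that its `(1,1)` entry is `-P*(0)+Λ*₀`. -/
def matK2s (ν : ℕ) (k lam : ℝ) : Matrix (Fin ν) (Fin ν) ℝ :=
  Matrix.of fun i j =>
    if (i : ℕ) = (j : ℕ) then
      (if (i : ℕ) = 0 then -lamePs (2 * ν) k 0 + lameLs (2 * ν) k lam 0
        else lameLs (2 * ν) k lam (i : ℕ))
    else if (j : ℕ) = (i : ℕ) + 1 then lamePs (2 * ν) k (-(((i : ℕ) : ℝ) + 1))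
    else if (i : ℕ) = (j : ℕ) + 1 then lamePs (2 * ν) k (((j : ℕ) : ℝ) + 1)
    else 0


open Real Topology MeasureTheory

theorem IsPreconnected.mul_pos_of_ne_zero {s : Set ℝ} (hs : IsPreconnected s) {f : ℝ → ℝ}
    (hf : ContinuousOn f s) (h0 : ∀ x ∈ s, f x ≠ 0) {x y : ℝ} (hx : x ∈ s) (hy : y ∈ s) :
    0 < f x * f y := by
  rcases (h0 x hx).lt_or_gt with hfx | hfx <;> rcases (h0 y hy).lt_or_gt with hfy | hfy
  · exact mul_pos_of_neg_of_neg hfx hfy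
  · obtain ⟨c, hc, hc0⟩ := hs.intermediate_value hx hy hf ⟨hfx.le, hfy.le⟩
    exact absurd hc0 (h0 c hc)
  · obtain ⟨c, hc, hc0⟩ := hs.intermediate_value hy hx hf ⟨hfy.le, hfx.le⟩
    exact absurd hc0 (h0 c hc)
  · exact mul_pos hfx hfy

theorem HasDerivAt.mul_nonneg_of_mul_pos_right {f : ℝ → ℝ} {f' a b c : ℝ} (hf : HasDerivAt f f' a)
    (ha : f a = 0) (hab : a < b) (hpos : ∀ y ∈ Ioo a b, 0 < c * f y) : 0 ≤ c * f' := by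
  refine ge_of_tendsto (((hasDerivAt_iff_tendsto_slope.1 hf).mono_left
    (nhdsGT_le_nhdsNE a)).const_mul c) ?_
  filter_upwards [Ioo_mem_nhdsGT hab] with y hy
  rw [slope_def_field, ha, sub_zero, ← mul_div_assoc]
  exact (div_pos (hpos y hy) (sub_pos.2 hy.1)).le

theorem HasDerivAt.mul_nonpos_of_mul_pos_left {f : ℝ → ℝ} {f' a b c : ℝ} (hf : HasDerivAt f f' b)
    (hb : f b = 0) (hab : a < b) (hpos : ∀ y ∈ Ioo a b, 0 < c * f y) : c * f' ≤ 0 := by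
  refine le_of_tendsto (((hasDerivAt_iff_tendsto_slope.1 hf).mono_left
    (nhdsLT_le_nhdsNE b)).const_mul c) ?_
  filter_upwards [Ioo_mem_nhdsLT hab] with y hy
  rw [slope_def_field, hb, sub_zero, ← mul_div_assoc]
  exact (div_neg_of_pos_of_neg (hpos y hy) (sub_neg.2 hy.2)).le

theorem ne_zero_of_hasDerivAt {f : ℝ → ℝ} {f' x : ℝ} (h : HasDerivAt f f' x) (hf' : f' ≠ 0) :
    f ≠ 0 := by
  rintro rfl
  exact hf' (h.unique (hasDerivAt_const x 0))

theorem exists_eq_zero_of_integral_eq_zero {f : ℝ → ℝ} {a b : ℝ} (hf : Continuous f) (hab : a < b)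
    (h : ∫ x in a..b, f x = 0) : ∃ c, f c = 0 := by
  by_contra! h0
  have hpos := intervalIntegral.intervalIntegral_pos_of_pos_on
    ((continuous_const.fun_mul hf).intervalIntegrable a b) (fun x _ =>
      isPreconnected_univ.mul_pos_of_ne_zero hf.continuousOn (fun x _ => h0 x) (mem_univ a)
        (mem_univ x)) hab
  rw [intervalIntegral.integral_const_mul, h, mul_zero] at hpos
  exact hpos.false

theorem integral_mul_add_mul_eq_zero {ψ f g : ℝ → ℝ} {a b : ℝ} (hψ : Continuous ψ)
    (hf : Continuous f) (hg : Continuous g) (hf0 : ∫ x in a..b, ψ x * f x = 0)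
    (hg0 : ∫ x in a..b, ψ x * g x = 0) (α β : ℝ) :
    ∫ x in a..b, ψ x * (α * f x + β * g x) = 0 := by
  simp_rw [mul_add, mul_left_comm (ψ _)]
  rw [intervalIntegral.integral_add
    ((continuous_const.fun_mul (hψ.fun_mul hf)).intervalIntegrable _ _)
    ((continuous_const.fun_mul (hψ.fun_mul hg)).intervalIntegrable _ _),
    intervalIntegral.integral_const_mul, intervalIntegral.integral_const_mul, hf0, hg0]
  ring

theorem exists_eq_zero_of_antiperiodic {f : ℝ → ℝ} {T : ℝ} (hf : Continuous f)
    (h : ∀ x, f (x + T) = -1 * f x) : ∃ c, f c = 0 := by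
  obtain ⟨c, -, hc⟩ := intermediate_value_uIcc (a := 0) (b := 0 + T) hf.continuousOn
    (show (0 : ℝ) ∈ uIcc (f 0) (f (0 + T)) by
      rw [h, mem_uIcc]; rcases le_total (f 0) 0 with h0 | h0
      · exact Or.inl ⟨h0, by linarith⟩
      · exact Or.inr ⟨by linarith, h0⟩)
  exact ⟨c, hc⟩

theorem sin_add_eq_zero_of_sin_sq_eq {w v : ℝ} (hwv : w < v) (hvw : v < w + π)
    (h : sin w ^ 2 = sin v ^ 2) : sin (w + v) = 0 := by
  have hsub : sin (v - w) ≠ 0 := (sin_pos_of_pos_of_lt_pi (by linarith) (by linarith)).ne'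
  have : sin (w + v) * sin (v - w) = 0 := by
    rw [sin_add, sin_sub]
    linear_combination (-1 : ℝ) * h + sin v ^ 2 * sin_sq_add_cos_sq w -
      sin w ^ 2 * sin_sq_add_cos_sq v
  exact (mul_eq_zero.1 this).resolve_right hsub

theorem sin_sq_ne_of_lt_of_lt {w₁ w₂ w₃ : ℝ} (h₁₂ : w₁ < w₂) (h₂₃ : w₂ < w₃) (h₃₁ : w₃ < w₁ + π)
    (h : sin w₁ ^ 2 = sin w₂ ^ 2) : sin w₁ ^ 2 ≠ sin w₃ ^ 2 := fun h' => by
  have h₂ := sin_add_eq_zero_of_sin_sq_eq h₁₂ (by linarith) h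
  have h₃ := sin_add_eq_zero_of_sin_sq_eq (h₁₂.trans h₂₃) h₃₁ h'
  have : sin (w₃ - w₂) = 0 := by
    rw [show w₃ - w₂ = (w₁ + w₃) - (w₁ + w₂) by ring, sin_sub, h₂, h₃]; ring
  exact (sin_pos_of_pos_of_lt_pi (by linarith) (by linarith)).ne' this

theorem sin_sub_mul_sin_sub (θ α β : ℝ) :
    sin (θ - α) * sin (θ - β) =
      cos (α + β) * sin θ ^ 2 - sin (α + β) * (sin θ * cos θ) + sin α * sin β := by
  rw [sin_sub, sin_sub, cos_add, sin_add]
  linear_combination sin α * sin β * sin_sq_add_cos_sq θ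

/-! ## Hill's equation -/

def IsNodalInterval (ψ : ℝ → ℝ) (a b : ℝ) : Prop :=
  a < b ∧ ψ a = 0 ∧ ψ b = 0 ∧ ∀ x ∈ Ioo a b, ψ x ≠ 0

def IsHillSolution (q : ℝ → ℝ) (μ : ℝ) (ψ : ℝ → ℝ) : Prop :=
  ContDiff ℝ 2 ψ ∧ ∀ x, deriv (deriv ψ) x = (q x - μ) * ψ x

namespace IsHillSolution

variable {q : ℝ → ℝ} {μ ν M a b : ℝ} {ψ φ : ℝ → ℝ}

theorem differentiable (hψ : IsHillSolution q μ ψ) : Differentiable ℝ ψ :=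
  hψ.1.differentiable (by norm_num)

theorem differentiable_deriv (hψ : IsHillSolution q μ ψ) : Differentiable ℝ (deriv ψ) :=
  ((contDiff_succ_iff_deriv (n := 1)).1 hψ.1).2.2.differentiable one_ne_zero

theorem continuous (hψ : IsHillSolution q μ ψ) : Continuous ψ :=
  hψ.differentiable.continuous

theorem hasDerivAt (hψ : IsHillSolution q μ ψ) (x : ℝ) : HasDerivAt ψ (deriv ψ x) x :=
  (hψ.differentiable x).hasDerivAt

theorem hasDerivAt_deriv (hψ : IsHillSolution q μ ψ) (x : ℝ) :
    HasDerivAt (deriv ψ) ((q x - μ) * ψ x) x :=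
  hψ.2 x ▸ (hψ.differentiable_deriv x).hasDerivAt

theorem deriv_add_eq_mul {T s : ℝ} (hψ : IsHillSolution q μ ψ) (hT : ∀ x, ψ (x + T) = s * ψ x)
    (x : ℝ) : deriv ψ (x + T) = s * deriv ψ x := by
  rw [← deriv_comp_add_const, funext hT, deriv_const_mul _ (hψ.differentiable x)]

theorem eq_zero_of_eq_zero_of_deriv_eq_zero (hψ : IsHillSolution q μ ψ) (hq : ∀ x, |q x| ≤ M)
    {z : ℝ} (hz : ψ z = 0) (hz' : deriv ψ z = 0) : ψ = 0 := by
  have hM : 0 ≤ M + |μ| := add_nonneg ((abs_nonneg _).trans (hq z)) (abs_nonneg μ)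
  have hLip (t : ℝ) : LipschitzOnWith (max 1 (M + |μ|).toNNReal)
      (fun y : ℝ × ℝ => (y.2, (q t - μ) * y.1)) univ := by
    refine (LipschitzWith.prod_snd.prodMk
      (LipschitzWith.of_dist_le_mul fun y y' => ?_)).lipschitzOnWith
    rw [Real.dist_eq, ← mul_sub, abs_mul, Real.coe_toNNReal _ hM]
    exact mul_le_mul ((abs_sub _ _).trans (by linarith [hq t]))
      (by rw [Prod.dist_eq, Real.dist_eq]; exact le_max_left _ _) (abs_nonneg _) hM
  have hunique := ODE_solution_unique_univ hLip (f := fun t => (ψ t, deriv ψ t)) (g := 0)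
    (t₀ := z) (fun t => ⟨(hψ.hasDerivAt t).prodMk (hψ.hasDerivAt_deriv t), trivial⟩)
    (fun t => ⟨(hasDerivAt_const t _).congr_deriv (by simp [Prod.mk_zero_zero]), trivial⟩)
    (by simp [hz, hz'])
  exact funext fun x => congrArg Prod.fst (congrFun hunique x)

theorem deriv_ne_zero (hψ : IsHillSolution q μ ψ) (hq : ∀ x, |q x| ≤ M) (hne : ψ ≠ 0) {z : ℝ}
    (hz : ψ z = 0) : deriv ψ z ≠ 0 :=
  fun hz' => hne (hψ.eq_zero_of_eq_zero_of_deriv_eq_zero hq hz hz')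

theorem exists_isNodalInterval (hψ : IsHillSolution q μ ψ) (hq : ∀ x, |q x| ≤ M) (hne : ψ ≠ 0)
    {w : ℝ} (ha : ψ a = 0) (haw : a < w) (hw : ψ w = 0) : ∃ b ≤ w, IsNodalInterval ψ a b := by
  obtain ⟨u, hu, hiso⟩ := mem_nhdsGT_iff_exists_Ioo_subset.1
    (((hψ.hasDerivAt a).eventually_ne (hψ.deriv_ne_zero hq hne ha)).filter_mono
      (nhdsGT_le_nhdsNE a))
  have hu : a < u := hu
  have hua : u ≤ w := not_lt.1 fun h => hiso ⟨haw, h⟩ (hw.trans ha.symm)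
  set S := {x | ψ x = 0} ∩ Ici u
  have hwS : w ∈ S := ⟨hw, hua⟩
  have hbdd : BddBelow S := ⟨u, fun x hx => hx.2⟩
  have hbS : sInf S ∈ S :=
    ((isClosed_eq hψ.continuous continuous_const).inter isClosed_Ici).csInf_mem ⟨w, hwS⟩ hbdd
  refine ⟨sInf S, csInf_le hbdd hwS, hu.trans_le hbS.2, ha, hbS.1, fun x hx hx0 => ?_⟩
  rcases lt_or_ge x u with h | h
  · exact hiso ⟨hx.1, h⟩ (hx0.trans ha.symm)
  · exact (csInf_le hbdd ⟨hx0, h⟩).not_gt hx.2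

theorem deriv_left_mul_pos (hψ : IsHillSolution q μ ψ) (hq : ∀ x, |q x| ≤ M) (hne : ψ ≠ 0)
    (hI : IsNodalInterval ψ a b) {x : ℝ} (hx : x ∈ Ioo a b) : 0 < deriv ψ a * ψ x := by
  have hsign (y : ℝ) (hy : y ∈ Ioo a b) : 0 < ψ x * ψ y :=
    isPreconnected_Ioo.mul_pos_of_ne_zero hψ.continuous.continuousOn hI.2.2.2 hx hy
  rw [mul_comm]
  exact ((hψ.hasDerivAt a).mul_nonneg_of_mul_pos_right hI.2.1 hI.1 hsign).lt_of_ne'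
    (mul_ne_zero (hI.2.2.2 x hx) (hψ.deriv_ne_zero hq hne hI.2.1))

theorem deriv_right_mul_neg (hψ : IsHillSolution q μ ψ) (hq : ∀ x, |q x| ≤ M) (hne : ψ ≠ 0)
    (hI : IsNodalInterval ψ a b) {x : ℝ} (hx : x ∈ Ioo a b) : deriv ψ b * ψ x < 0 := by
  have hsign (y : ℝ) (hy : y ∈ Ioo a b) : 0 < ψ x * ψ y :=
    isPreconnected_Ioo.mul_pos_of_ne_zero hψ.continuous.continuousOn hI.2.2.2 hx hy
  rw [mul_comm]
  exact ((hψ.hasDerivAt b).mul_nonpos_of_mul_pos_left hI.2.2.1 hI.1 hsign).lt_of_ne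
    (mul_ne_zero (hI.2.2.2 x hx) (hψ.deriv_ne_zero hq hne hI.2.2.1))

theorem hasDerivAt_wronskian (hψ : IsHillSolution q μ ψ) (hφ : IsHillSolution q ν φ) (x : ℝ) :
    HasDerivAt (fun x => deriv ψ x * φ x - ψ x * deriv φ x) ((ν - μ) * (ψ x * φ x)) x :=
  (((hψ.hasDerivAt_deriv x).mul (hφ.hasDerivAt x)).sub
    ((hψ.hasDerivAt x).mul (hφ.hasDerivAt_deriv x))).congr_deriv (by ring)

theorem deriv_mul_deriv_neg (hψ : IsHillSolution q μ ψ) (hq : ∀ x, |q x| ≤ M) (hne : ψ ≠ 0)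
    (hI : IsNodalInterval ψ a b) : deriv ψ a * deriv ψ b < 0 := by
  obtain ⟨m, hm⟩ := nonempty_Ioo.2 hI.1
  have := mul_pos (hψ.deriv_left_mul_pos hq hne hI hm)
    (neg_pos.2 (hψ.deriv_right_mul_neg hq hne hI hm))
  by_contra! hc
  nlinarith [mul_nonneg hc (sq_nonneg (ψ m))]

theorem sturm_comparison (hψ : IsHillSolution q μ ψ) (hφ : IsHillSolution q ν φ)
    (hq : ∀ x, |q x| ≤ M) (hne : ψ ≠ 0) (hμν : μ < ν) (hI : IsNodalInterval ψ a b) :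
    ∃ c ∈ Ioo a b, φ c = 0 := by
  have hab := hI.1
  by_contra! hφ0
  obtain ⟨m, hm⟩ := nonempty_Ioo.2 hab
  have hψsign : ∀ x ∈ Ioo a b, 0 < deriv ψ a * ψ x := fun x => hψ.deriv_left_mul_pos hq hne hI
  have hφsign : ∀ x ∈ Ioo a b, 0 < φ m * φ x := fun x =>
    isPreconnected_Ioo.mul_pos_of_ne_zero hφ.continuous.continuousOn hφ0 hm
  have hφsign' : ∀ x ∈ Icc a b, 0 ≤ φ m * φ x := by
    rw [← closure_Ioo hab.ne]
    exact (isClosed_le continuous_const (continuous_const.mul hφ.continuous)).closure_subset_iff.2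
      fun x hx => (hφsign x hx).le
  set V := fun x => deriv ψ a * φ m * (deriv ψ x * φ x - ψ x * deriv φ x)
  have hV : ∀ x, HasDerivAt V (deriv ψ a * φ m * ((ν - μ) * (ψ x * φ x))) x := fun x =>
    (hψ.hasDerivAt_wronskian hφ x).const_mul _
  have hVmono : V a < V b := by
    refine strictMonoOn_of_deriv_pos (convex_Icc a b)
      (Differentiable.continuous fun x => (hV x).differentiableAt).continuousOn (fun x hx => ?_)
      ⟨le_rfl, hab.le⟩ ⟨hab.le, le_rfl⟩ hab
    rw [interior_Icc] at hx
    rw [(hV x).deriv, show ∀ c d e f g : ℝ, c * d * (e * (f * g)) = e * ((c * f) * (d * g)) by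
      intros; ring]
    exact mul_pos (sub_pos.2 hμν) (mul_pos (hψsign x hx) (hφsign x hx))
  have hψ'b := hψ.deriv_mul_deriv_neg hq hne hI
  have hVa : V a = deriv ψ a ^ 2 * (φ m * φ a) := by simp only [V, hI.2.1]; ring
  have hVb : V b = deriv ψ a * deriv ψ b * (φ m * φ b) := by simp only [V, hI.2.2.1]; ring
  nlinarith [hφsign' a ⟨le_rfl, hab.le⟩, hφsign' b ⟨hab.le, le_rfl⟩, sq_nonneg (deriv ψ a)]

theorem integral_mul_eq_zero (hψ : IsHillSolution q μ ψ) (hφ : IsHillSolution q ν φ)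
    (hμν : μ ≠ ν) {T s t : ℝ} (hψT : ∀ x, ψ (x + T) = s * ψ x) (hφT : ∀ x, φ (x + T) = t * φ x)
    (hst : s * t = 1) (a : ℝ) : ∫ x in a..a + T, ψ x * φ x = 0 := by
  have hW := intervalIntegral.integral_deriv_eq_sub' _
    (funext fun x => (hψ.hasDerivAt_wronskian hφ x).deriv)
    (fun x _ => (hψ.hasDerivAt_wronskian hφ x).differentiableAt)
    (continuous_const.mul (hψ.continuous.mul hφ.continuous)).continuousOn (a := a) (b := a + T)
  rw [hψT, hφT, hψ.deriv_add_eq_mul hψT, hφ.deriv_add_eq_mul hφT,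
    intervalIntegral.integral_const_mul] at hW
  have : (ν - μ) * ∫ x in a..a + T, ψ x * φ x = 0 := by
    rw [hW]; linear_combination (deriv ψ a * φ a - ψ a * deriv φ a) * hst
  exact (mul_eq_zero.1 this).resolve_left (sub_ne_zero.2 hμν.symm)

end IsHillSolution

theorem IsFloquetSolution.isHillSolution {q : ℝ → ℝ} {T μ s : ℝ} {ψ : ℝ → ℝ}
    (h : IsFloquetSolution q T μ s ψ) : IsHillSolution q μ ψ :=
  ⟨h.2.1, fun x => by linarith [h.2.2.1 x]⟩

theorem IsHillSolution.isFloquetSolution {q : ℝ → ℝ} {T μ s : ℝ} {ψ : ℝ → ℝ}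
    (h : IsHillSolution q μ ψ) (hne : ψ ≠ 0) (hT : ∀ x, ψ (x + T) = s * ψ x) :
    IsFloquetSolution q T μ s ψ :=
  ⟨hne, h.1, fun x => by linarith [h.2 x], hT⟩

theorem isHillSolution_of_hasDerivAt {q : ℝ → ℝ} {μ : ℝ} {ψ ψ' : ℝ → ℝ} (hψ : ContDiff ℝ 2 ψ)
    (h₁ : ∀ x, HasDerivAt ψ (ψ' x) x) (h₂ : ∀ x, HasDerivAt ψ' ((q x - μ) * ψ x) x) :
    IsHillSolution q μ ψ :=
  ⟨hψ, fun x => by rw [funext fun x => (h₁ x).deriv]; exact (h₂ x).deriv⟩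

/-! ## Jacobi elliptic functions -/

namespace IsJacobiSn

variable {k : ℝ} {sn : ℝ → ℝ}

theorem differentiable (hsn : IsJacobiSn k sn) : Differentiable ℝ sn :=
  hsn.1.differentiable (by norm_num)

theorem continuous (hsn : IsJacobiSn k sn) : Continuous sn :=
  hsn.differentiable.continuous

theorem contDiff_deriv (hsn : IsJacobiSn k sn) : ContDiff ℝ 2 (deriv sn) := by
  have hsn' := (contDiff_succ_iff_deriv (n := 1)).1 hsn.1
  refine (contDiff_succ_iff_deriv (n := 1)).2 ⟨hsn'.2.2.differentiable one_ne_zero, by simp, ?_⟩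
  rw [funext hsn.2.2.2]
  exact ((contDiff_const.mul hsn.1).add (contDiff_const.mul (hsn.1.pow 3))).of_le (by norm_num)

theorem differentiable_deriv (hsn : IsJacobiSn k sn) : Differentiable ℝ (deriv sn) :=
  hsn.contDiff_deriv.differentiable (by norm_num)

theorem deriv_sq (hsn : IsJacobiSn k sn) (x : ℝ) :
    deriv sn x ^ 2 = (1 - sn x ^ 2) * (1 - k ^ 2 * sn x ^ 2) := by
  have hder : ∀ y, HasDerivAt
      (fun x => deriv sn x ^ 2 - (1 - sn x ^ 2) * (1 - k ^ 2 * sn x ^ 2)) 0 y := by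
    intro y
    have h1 := (hsn.differentiable y).hasDerivAt
    have h2 := (hsn.differentiable_deriv y).hasDerivAt
    refine ((h2.fun_pow 2).sub (((h1.fun_pow 2).const_sub 1).mul
      (((h1.fun_pow 2).const_mul (k ^ 2)).const_sub 1))).congr_deriv ?_
    rw [hsn.2.2.2 y]; ring
  have hconst := is_const_of_deriv_eq_zero (fun z => (hder z).differentiableAt)
    (fun z => (hder z).deriv) x 0
  simp only [hsn.2.1, hsn.2.2.1] at hconst
  linarith

theorem sq_le_one (hk : k ^ 2 < 1) (hsn : IsJacobiSn k sn) (x : ℝ) : sn x ^ 2 ≤ 1 := by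
  by_contra! hx
  set c := 1 + min (sn x ^ 2 - 1) (1 - k ^ 2) / 2 with hc
  have hc1 : 1 < c := by have := lt_min (sub_pos.2 hx) (sub_pos.2 hk); linarith
  have hcx : c ≤ sn x ^ 2 := by linarith [min_le_left (sn x ^ 2 - 1) (1 - k ^ 2)]
  have hck : k ^ 2 * c < 1 := by
    have := min_le_right (sn x ^ 2 - 1) (1 - k ^ 2)
    nlinarith [sq_nonneg k]
  obtain ⟨y, -, hy⟩ := intermediate_value_uIcc (a := 0) (b := x)
    (hsn.continuous.pow 2).continuousOn (show c ∈ uIcc (sn 0 ^ 2) (sn x ^ 2) by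
      rw [hsn.2.1, uIcc_of_le (by nlinarith)]; constructor <;> linarith)
  have := hsn.deriv_sq y
  rw [Pi.pow_apply] at hy
  rw [hy] at this
  nlinarith [sq_nonneg (deriv sn y)]

end IsJacobiSn

def ellF (k φ : ℝ) : ℝ := ∫ t in (0 : ℝ)..φ, 1 / √(1 - k ^ 2 * sin t ^ 2)

section EllipticIntegral

variable {k : ℝ} (hk : k ^ 2 < 1)
include hk

theorem one_sub_sq_mul_sin_sq_pos (t : ℝ) : 0 < 1 - k ^ 2 * sin t ^ 2 := by
  nlinarith [mul_le_mul_of_nonneg_left (sin_sq_le_one t) (sq_nonneg k)]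

theorem continuous_ellIntegrand : Continuous fun t => 1 / √(1 - k ^ 2 * sin t ^ 2) :=
  continuous_const.div (continuous_const.sub (continuous_const.mul (continuous_sin.pow 2))).sqrt
    fun t => (Real.sqrt_pos.2 (one_sub_sq_mul_sin_sq_pos hk t)).ne'

theorem ellK_pos : 0 < ellK k :=
  intervalIntegral.intervalIntegral_pos_of_pos ((continuous_ellIntegrand hk).intervalIntegrable _ _)
    (fun t => one_div_pos.2 (Real.sqrt_pos.2 (one_sub_sq_mul_sin_sq_pos hk t))) (by positivity)

theorem hasDerivAt_ellF (φ : ℝ) : HasDerivAt (ellF k) (1 / √(1 - k ^ 2 * sin φ ^ 2)) φ :=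
  intervalIntegral.integral_hasDerivAt_right ((continuous_ellIntegrand hk).intervalIntegrable 0 φ)
    ((continuous_ellIntegrand hk).stronglyMeasurableAtFilter _ _)
    (continuous_ellIntegrand hk).continuousAt

theorem strictMono_ellF : StrictMono (ellF k) :=
  strictMono_of_hasDerivAt_pos (hasDerivAt_ellF hk)
    fun t => one_div_pos.2 (Real.sqrt_pos.2 (one_sub_sq_mul_sin_sq_pos hk t))

theorem integral_ellIntegrand_zero_pi :
    ∫ t in (0 : ℝ)..π, 1 / √(1 - k ^ 2 * sin t ^ 2) = 2 * ellK k := by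
  have hint := fun a b => (continuous_ellIntegrand hk).intervalIntegrable (μ := volume) a b
  have hreflect := intervalIntegral.integral_comp_sub_left
    (fun t => 1 / √(1 - k ^ 2 * sin t ^ 2)) π (a := 0) (b := π / 2)
  simp only [sin_pi_sub, sub_zero, show π - π / 2 = π / 2 by ring] at hreflect
  rw [← intervalIntegral.integral_add_adjacent_intervals (hint 0 (π / 2)) (hint (π / 2) π),
    ← hreflect, ellK]
  ring

theorem ellF_add_pi (φ : ℝ) : ellF k (φ + π) = ellF k φ + 2 * ellK k := by
  have hperiodic : Function.Periodic (fun t => 1 / √(1 - k ^ 2 * sin t ^ 2)) π := fun t => by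
    simp [sin_add_pi]
  rw [ellF, ← intervalIntegral.integral_add_adjacent_intervals
    ((continuous_ellIntegrand hk).intervalIntegrable 0 φ)
    ((continuous_ellIntegrand hk).intervalIntegrable φ (φ + π)),
    hperiodic.intervalIntegral_add_eq φ 0, zero_add, integral_ellIntegrand_zero_pi hk, ellF]

end EllipticIntegral

namespace Jacobi

def dn (k : ℝ) (sn : ℝ → ℝ) (x : ℝ) : ℝ := √(1 - k ^ 2 * sn x ^ 2)

def cn (k : ℝ) (sn : ℝ → ℝ) (x : ℝ) : ℝ := deriv sn x / dn k sn x

def am (k : ℝ) (sn : ℝ → ℝ) (x : ℝ) : ℝ := ∫ t in (0 : ℝ)..x, dn k sn t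

variable {k : ℝ} {sn : ℝ → ℝ} (hk : k ^ 2 < 1) (hsn : IsJacobiSn k sn)
include hk hsn

theorem one_sub_sq_mul_sn_sq_pos (x : ℝ) : 0 < 1 - k ^ 2 * sn x ^ 2 := by
  nlinarith [mul_le_mul_of_nonneg_left (hsn.sq_le_one hk x) (sq_nonneg k)]

theorem dn_pos (x : ℝ) : 0 < dn k sn x :=
  Real.sqrt_pos.2 (one_sub_sq_mul_sn_sq_pos hk hsn x)

theorem dn_sq (x : ℝ) : dn k sn x ^ 2 = 1 - k ^ 2 * sn x ^ 2 :=
  Real.sq_sqrt (one_sub_sq_mul_sn_sq_pos hk hsn x).le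

theorem contDiff_dn : ContDiff ℝ 2 (dn k sn) :=
  (contDiff_const.sub (contDiff_const.mul (hsn.1.pow 2))).sqrt
    fun x => (one_sub_sq_mul_sn_sq_pos hk hsn x).ne'

theorem continuous_dn : Continuous (dn k sn) :=
  (contDiff_dn hk hsn).continuous

theorem contDiff_cn : ContDiff ℝ 2 (cn k sn) :=
  hsn.contDiff_deriv.div (contDiff_dn hk hsn) fun x => (dn_pos hk hsn x).ne'

theorem cn_mul_dn (x : ℝ) : cn k sn x * dn k sn x = deriv sn x :=
  div_mul_cancel₀ _ (dn_pos hk hsn x).ne'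

theorem cn_sq (x : ℝ) : cn k sn x ^ 2 = 1 - sn x ^ 2 := by
  rw [cn, div_pow, hsn.deriv_sq, ← dn_sq hk hsn,
    mul_div_cancel_right₀ _ (pow_ne_zero 2 (dn_pos hk hsn x).ne')]

theorem hasDerivAt_sn (x : ℝ) : HasDerivAt sn (cn k sn x * dn k sn x) x :=
  cn_mul_dn hk hsn x ▸ (hsn.differentiable x).hasDerivAt

theorem hasDerivAt_dn (x : ℝ) : HasDerivAt (dn k sn) (-k ^ 2 * sn x * cn k sn x) x := by
  refine ((((hasDerivAt_sn hk hsn x).fun_pow 2).const_mul (k ^ 2)).const_sub 1 |>.sqrt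
    (one_sub_sq_mul_sn_sq_pos hk hsn x).ne').congr_deriv ?_
  have := (dn_pos hk hsn x).ne'
  simp only [dn] at this ⊢
  field_simp
  norm_num
  ring

theorem hasDerivAt_cn (x : ℝ) : HasDerivAt (cn k sn) (-(sn x * dn k sn x)) x := by
  have hdiv := (hsn.differentiable_deriv x).hasDerivAt.div (hasDerivAt_dn hk hsn x)
    (dn_pos hk hsn x).ne'
  refine hdiv.congr_deriv ?_
  rw [div_eq_iff (pow_ne_zero 2 (dn_pos hk hsn x).ne'), hsn.2.2.2 x, ← cn_mul_dn hk hsn x]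
  linear_combination (k ^ 2 * sn x * dn k sn x) * cn_sq hk hsn x +
    (sn x * dn k sn x) * dn_sq hk hsn x

omit hk in
theorem cn_zero : cn k sn 0 = 1 := by simp [cn, dn, hsn.2.1, hsn.2.2.1]

theorem hasDerivAt_am (x : ℝ) : HasDerivAt (am k sn) (dn k sn x) x :=
  intervalIntegral.integral_hasDerivAt_right ((continuous_dn hk hsn).intervalIntegrable 0 x)
    ((continuous_dn hk hsn).stronglyMeasurableAtFilter _ _) (continuous_dn hk hsn).continuousAt

theorem continuous_am : Continuous (am k sn) :=
  continuous_iff_continuousAt.2 fun x => (hasDerivAt_am hk hsn x).continuousAt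

theorem strictMono_am : StrictMono (am k sn) :=
  strictMono_of_hasDerivAt_pos (hasDerivAt_am hk hsn) (dn_pos hk hsn)

theorem sn_eq_sin_am_and_cn_eq_cos_am (x : ℝ) :
    sn x = sin (am k sn x) ∧ cn k sn x = cos (am k sn x) := by
  have hder : ∀ y, HasDerivAt
      (fun y => (sn y - sin (am k sn y)) ^ 2 + (cn k sn y - cos (am k sn y)) ^ 2) 0 y := by
    intro y
    have ham := hasDerivAt_am hk hsn y
    refine ((((hasDerivAt_sn hk hsn y).fun_sub ham.sin).fun_pow 2).fun_add
      (((hasDerivAt_cn hk hsn y).fun_sub ham.cos).fun_pow 2)).congr_deriv ?_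
    ring
  have hconst := is_const_of_deriv_eq_zero (fun z => (hder z).differentiableAt)
    (fun z => (hder z).deriv) x 0
  have ham0 : am k sn 0 = 0 := intervalIntegral.integral_same
  simp only [hsn.2.1, cn_zero hsn, ham0, sin_zero, cos_zero, sub_self] at hconst
  constructor <;> nlinarith [sq_nonneg (sn x - sin (am k sn x)),
    sq_nonneg (cn k sn x - cos (am k sn x))]

theorem sn_eq_sin_am (x : ℝ) : sn x = sin (am k sn x) :=
  (sn_eq_sin_am_and_cn_eq_cos_am hk hsn x).1

theorem cn_eq_cos_am (x : ℝ) : cn k sn x = cos (am k sn x) :=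
  (sn_eq_sin_am_and_cn_eq_cos_am hk hsn x).2

theorem ellF_am (x : ℝ) : ellF k (am k sn x) = x := by
  have hder : ∀ z, HasDerivAt (fun x => ellF k (am k sn x) - x) 0 z := fun z => by
    refine (((hasDerivAt_ellF hk _).comp z (hasDerivAt_am hk hsn z)).sub
      (hasDerivAt_id z)).congr_deriv ?_
    rw [← sn_eq_sin_am hk hsn z, one_div_mul_eq_div, ← dn, div_self (dn_pos hk hsn z).ne', sub_self]
  have hconst := is_const_of_deriv_eq_zero (fun z => (hder z).differentiableAt)
    (fun z => (hder z).deriv) x 0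
  have ham0 : am k sn 0 = 0 := intervalIntegral.integral_same
  have hF0 : ellF k 0 = 0 := intervalIntegral.integral_same
  rw [ham0, hF0, sub_zero] at hconst
  linarith

theorem am_add_two_ellK (x : ℝ) : am k sn (x + 2 * ellK k) = am k sn x + π :=
  (strictMono_ellF hk).injective (by rw [ellF_am hk hsn, ellF_add_pi hk, ellF_am hk hsn])

theorem am_lt_am_add_pi {x y : ℝ} (h : y < x + 2 * ellK k) : am k sn y < am k sn x + π :=
  am_add_two_ellK hk hsn x ▸ strictMono_am hk hsn h

theorem sn_add_two_ellK (x : ℝ) : sn (x + 2 * ellK k) = -sn x := by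
  rw [sn_eq_sin_am hk hsn, sn_eq_sin_am hk hsn, am_add_two_ellK hk hsn, sin_add_pi]

theorem cn_add_two_ellK (x : ℝ) : cn k sn (x + 2 * ellK k) = -cn k sn x := by
  rw [cn_eq_cos_am hk hsn, cn_eq_cos_am hk hsn, am_add_two_ellK hk hsn, cos_add_pi]

theorem dn_add_two_ellK (x : ℝ) : dn k sn (x + 2 * ellK k) = dn k sn x := by
  rw [dn, sn_add_two_ellK hk hsn, neg_sq, dn]

theorem deriv_sn_add_two_ellK (x : ℝ) : deriv sn (x + 2 * ellK k) = -deriv sn x := by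
  rw [← cn_mul_dn hk hsn, ← cn_mul_dn hk hsn, cn_add_two_ellK hk hsn, dn_add_two_ellK hk hsn,
    neg_mul]

end Jacobi

/-! ## The Lamé equation with `m = 2` -/

theorem lamePot_two (k : ℝ) (sn : ℝ → ℝ) (x : ℝ) : lamePot 2 k sn x = 6 * k ^ 2 * sn x ^ 2 := by
  rw [lamePot]; norm_num

theorem sq_lt_one_of_mem_Ioo {k : ℝ} (hk : k ∈ Ioo 0 1) : k ^ 2 < 1 :=
  pow_lt_one₀ hk.1.le hk.2 two_ne_zero

def lameLambda₀ (k : ℝ) : ℝ := 2 * (1 + k ^ 2 - √(1 - k ^ 2 + k ^ 4))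

def lameLambda₂ (k : ℝ) : ℝ := 2 * (1 + k ^ 2 + √(1 - k ^ 2 + k ^ 4))

theorem sq_sqrt_one_sub_sq_add_pow_four (k : ℝ) :
    √(1 - k ^ 2 + k ^ 4) ^ 2 = 1 - k ^ 2 + k ^ 4 :=
  Real.sq_sqrt (by nlinarith [sq_nonneg (k ^ 2 - 1)])

theorem lameLambda₀_isRoot (k : ℝ) :
    lameLambda₀ k ^ 2 - 4 * (1 + k ^ 2) * lameLambda₀ k + 12 * k ^ 2 = 0 := by
  rw [lameLambda₀]; linear_combination 4 * sq_sqrt_one_sub_sq_add_pow_four k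

theorem lameLambda₂_isRoot (k : ℝ) :
    lameLambda₂ k ^ 2 - 4 * (1 + k ^ 2) * lameLambda₂ k + 12 * k ^ 2 = 0 := by
  rw [lameLambda₂]; linear_combination 4 * sq_sqrt_one_sub_sq_add_pow_four k

theorem lame_eigenvalues_lt {k : ℝ} (hk : k ∈ Ioo 0 1) :
    0 < lameLambda₀ k ∧ lameLambda₀ k < 1 + k ^ 2 ∧ 1 + k ^ 2 < 1 + 4 * k ^ 2 ∧
      1 + 4 * k ^ 2 < 4 + k ^ 2 ∧ 4 + k ^ 2 < lameLambda₂ k := by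
  have hk1 := sq_lt_one_of_mem_Ioo hk
  have hk0 : 0 < k ^ 2 := pow_pos hk.1 2
  have hD := sq_sqrt_one_sub_sq_add_pow_four k
  have hD0 := Real.sqrt_nonneg (1 - k ^ 2 + k ^ 4)
  refine ⟨?_, ?_, by linarith, by linarith, ?_⟩ <;> simp only [lameLambda₀, lameLambda₂]
  · nlinarith
  · nlinarith
  · nlinarith

namespace Lame

open Jacobi

section

variable {k : ℝ} {sn : ℝ → ℝ} (hk : k ^ 2 < 1) (hsn : IsJacobiSn k sn)
include hk hsn

theorem abs_lamePot_two_le (x : ℝ) : |lamePot 2 k sn x| ≤ 6 * k ^ 2 := by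
  rw [lamePot_two, abs_of_nonneg (by positivity)]
  nlinarith [mul_le_mul_of_nonneg_left (hsn.sq_le_one hk x) (sq_nonneg k)]

theorem isFloquetSolution_sn_sq_sub {μ : ℝ} (hμ : μ ^ 2 - 4 * (1 + k ^ 2) * μ + 12 * k ^ 2 = 0)
    (hμ0 : μ ≠ 0) :
    IsFloquetSolution (lamePot 2 k sn) (2 * ellK k) μ 1 fun x => sn x ^ 2 - 2 / μ := by
  have hsol := isHillSolution_of_hasDerivAt (q := lamePot 2 k sn) (μ := μ)
    (ψ := fun x => sn x ^ 2 - 2 / μ) ((hsn.1.pow 2).sub contDiff_const)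
    (ψ' := fun x => 2 * sn x * (cn k sn x * dn k sn x))
    (fun x => (((hasDerivAt_sn hk hsn x).fun_pow 2).sub_const _).congr_deriv (by ring))
    fun x => by
      refine (((hasDerivAt_sn hk hsn x).const_mul 2).fun_mul ((hasDerivAt_cn hk hsn x).fun_mul
        (hasDerivAt_dn hk hsn x))).congr_deriv ?_
      rw [lamePot_two]
      linear_combination (norm := skip) (2 * dn k sn x ^ 2 - 2 * k ^ 2 * sn x ^ 2) * cn_sq hk hsn x
        + (2 - 4 * sn x ^ 2) * dn_sq hk hsn x + (sn x ^ 2 / μ) * hμ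
      field_simp
      ring
  refine hsol.isFloquetSolution (fun h => ?_) fun x => by rw [sn_add_two_ellK hk hsn]; ring
  have := congrFun h 0
  simp [hsn.2.1, hμ0] at this

theorem isFloquetSolution_sn_mul_cn :
    IsFloquetSolution (lamePot 2 k sn) (2 * ellK k) (4 + k ^ 2) 1 fun x => sn x * cn k sn x := by
  have h₁ : ∀ x, HasDerivAt (fun x => sn x * cn k sn x)
      (dn k sn x * (cn k sn x ^ 2 - sn x ^ 2)) x := fun x =>
    ((hasDerivAt_sn hk hsn x).fun_mul (hasDerivAt_cn hk hsn x)).congr_deriv (by ring)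
  refine (isHillSolution_of_hasDerivAt (hsn.1.mul (contDiff_cn hk hsn)) h₁ fun x => ?_)
    |>.isFloquetSolution (ne_zero_of_hasDerivAt (h₁ 0) (by simp [dn, cn_zero hsn, hsn.2.1]))
    fun x => by rw [sn_add_two_ellK hk hsn, cn_add_two_ellK hk hsn]; ring
  refine ((hasDerivAt_dn hk hsn x).fun_mul (((hasDerivAt_cn hk hsn x).fun_pow 2).fun_sub
    ((hasDerivAt_sn hk hsn x).fun_pow 2))).congr_deriv ?_
  rw [lamePot_two]
  linear_combination (-k ^ 2 * sn x * cn k sn x) * cn_sq hk hsn x +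
    (-4 * sn x * cn k sn x) * dn_sq hk hsn x

theorem isFloquetSolution_sn_mul_dn :
    IsFloquetSolution (lamePot 2 k sn) (2 * ellK k) (1 + 4 * k ^ 2) (-1)
      fun x => sn x * dn k sn x := by
  have h₁ : ∀ x, HasDerivAt (fun x => sn x * dn k sn x)
      (cn k sn x * (dn k sn x ^ 2 - k ^ 2 * sn x ^ 2)) x := fun x =>
    ((hasDerivAt_sn hk hsn x).fun_mul (hasDerivAt_dn hk hsn x)).congr_deriv (by ring)
  refine (isHillSolution_of_hasDerivAt (hsn.1.mul (contDiff_dn hk hsn)) h₁ fun x => ?_)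
    |>.isFloquetSolution (ne_zero_of_hasDerivAt (h₁ 0) (by simp [dn, cn_zero hsn, hsn.2.1]))
    fun x => by rw [sn_add_two_ellK hk hsn, dn_add_two_ellK hk hsn]; ring
  refine ((hasDerivAt_cn hk hsn x).fun_mul (((hasDerivAt_dn hk hsn x).fun_pow 2).fun_sub
    (((hasDerivAt_sn hk hsn x).fun_pow 2).const_mul (k ^ 2)))).congr_deriv ?_
  rw [lamePot_two]
  linear_combination (-4 * k ^ 2 * sn x * dn k sn x) * cn_sq hk hsn x +
    (-sn x * dn k sn x) * dn_sq hk hsn x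

theorem isFloquetSolution_deriv_sn :
    IsFloquetSolution (lamePot 2 k sn) (2 * ellK k) (1 + k ^ 2) (-1) (deriv sn) := by
  have h₁ : ∀ x, HasDerivAt (deriv sn) (-(1 + k ^ 2) * sn x + 2 * k ^ 2 * sn x ^ 3) x := fun x =>
    hsn.2.2.2 x ▸ (hsn.differentiable_deriv x).hasDerivAt
  refine (isHillSolution_of_hasDerivAt hsn.contDiff_deriv h₁ fun x => ?_).isFloquetSolution
    (fun h => by simpa [h] using hsn.2.2.1)
    fun x => by rw [deriv_sn_add_two_ellK hk hsn]; ring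
  refine (((hasDerivAt_sn hk hsn x).const_mul _).fun_add
    (((hasDerivAt_sn hk hsn x).fun_pow 3).const_mul _)).congr_deriv ?_
  rw [lamePot_two, ← cn_mul_dn hk hsn]
  ring

theorem integral_pos_of_two_nodalIntervals {μ a z : ℝ} {ψ : ℝ → ℝ}
    (hψ : IsHillSolution (lamePot 2 k sn) μ ψ) (hne : ψ ≠ 0) (h₁ : IsNodalInterval ψ a z)
    (h₂ : IsNodalInterval ψ z (a + 2 * ellK k)) :
    0 < ∫ x in a..a + 2 * ellK k,
      deriv ψ z * (ψ x * (sin (am k sn x - am k sn a) * sin (am k sn x - am k sn z))) := by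
  have hq := abs_lamePot_two_le hk hsn
  have ham := continuous_am hk hsn
  have hψc := hψ.continuous
  have hint : ∀ b c, IntervalIntegrable (fun x => deriv ψ z *
      (ψ x * (sin (am k sn x - am k sn a) * sin (am k sn x - am k sn z)))) volume b c :=
    fun b c => Continuous.intervalIntegrable (by fun_prop) b c
  rw [← intervalIntegral.integral_add_adjacent_intervals (hint a z) (hint z _)]
  have hmono := strictMono_am hk hsn
  have hπ {x : ℝ} (hx : x < a + 2 * ellK k) := am_lt_am_add_pi hk hsn hx
  refine add_pos (intervalIntegral.intervalIntegral_pos_of_pos_on (hint a z) (fun x hx => ?_) h₁.1)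
    (intervalIntegral.intervalIntegral_pos_of_pos_on (hint z _) (fun x hx => ?_) h₂.1)
  · have hψx := neg_pos.2 (hψ.deriv_right_mul_neg hq hne h₁ hx)
    have hxa := hmono hx.1
    have hxz := hmono hx.2
    have hza := hπ (h₂.1)
    have s₁ := sin_pos_of_pos_of_lt_pi (sub_pos.2 hxa) (by linarith)
    have s₂ := sin_pos_of_pos_of_lt_pi (sub_pos.2 hxz) (by linarith)
    rw [← neg_sub (am k sn z), sin_neg]
    nlinarith [mul_pos hψx (mul_pos s₁ s₂)]
  · have hψx := hψ.deriv_left_mul_pos hq hne h₂ hx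
    have hza := hmono h₁.1
    have hxz := hmono hx.1
    have hxa := hπ hx.2
    have s₁ := sin_pos_of_pos_of_lt_pi (by linarith) (by linarith : am k sn x - am k sn a < π)
    have s₂ := sin_pos_of_pos_of_lt_pi (sub_pos.2 hxz) (by linarith)
    nlinarith [mul_pos hψx (mul_pos s₁ s₂)]

theorem integral_pos_of_nodalInterval {μ a : ℝ} {ψ : ℝ → ℝ}
    (hψ : IsHillSolution (lamePot 2 k sn) μ ψ) (hne : ψ ≠ 0)
    (h : IsNodalInterval ψ a (a + 2 * ellK k)) :
    0 < ∫ x in a..a + 2 * ellK k,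
      deriv ψ a * (ψ x * (dn k sn x * sin (am k sn x - am k sn a))) := by
  have ham := continuous_am hk hsn
  have hdn := continuous_dn hk hsn
  have hψc := hψ.continuous
  refine intervalIntegral.intervalIntegral_pos_of_pos_on (Continuous.intervalIntegrable
    (by fun_prop) _ _) (fun x hx => ?_) h.1
  have hψx := hψ.deriv_left_mul_pos (abs_lamePot_two_le hk hsn) hne h hx
  have hs := sin_pos_of_pos_of_lt_pi (sub_pos.2 (strictMono_am hk hsn hx.1))
    (by linarith [am_lt_am_add_pi hk hsn hx.2])
  nlinarith [mul_pos hψx (mul_pos (dn_pos hk hsn x) hs)]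

end

variable {k : ℝ} {sn : ℝ → ℝ} (hk : k ∈ Ioo 0 1) (hsn : IsJacobiSn k sn)
include hk hsn

theorem isFloquetSolution_lameLambda₀ :
    IsFloquetSolution (lamePot 2 k sn) (2 * ellK k) (lameLambda₀ k) 1
      fun x => sn x ^ 2 - 2 / lameLambda₀ k :=
  isFloquetSolution_sn_sq_sub (sq_lt_one_of_mem_Ioo hk) hsn (lameLambda₀_isRoot k)
    (lame_eigenvalues_lt hk).1.ne'

theorem isFloquetSolution_lameLambda₂ :
    IsFloquetSolution (lamePot 2 k sn) (2 * ellK k) (lameLambda₂ k) 1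
      fun x => sn x ^ 2 - 2 / lameLambda₂ k :=
  isFloquetSolution_sn_sq_sub (sq_lt_one_of_mem_Ioo hk) hsn (lameLambda₂_isRoot k)
    (by linarith [lame_eigenvalues_lt hk])

/-- Sturm comparison with `sn² - 2/λ₂`, whose zeros are the points where `sin² ∘ am` takes the
value `2/λ₂`; this happens only twice per period. -/
theorem false_of_three_nodalIntervals {μ : ℝ} {ψ : ℝ → ℝ}
    (hψ : IsHillSolution (lamePot 2 k sn) μ ψ) (hne : ψ ≠ 0) (hμ : μ < lameLambda₂ k)
    {a z₁ z₂ z₃ : ℝ} (h₁ : IsNodalInterval ψ a z₁) (h₂ : IsNodalInterval ψ z₁ z₂)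
    (h₃ : IsNodalInterval ψ z₂ z₃) (hz₃ : z₃ ≤ a + 2 * ellK k) : False := by
  have hk2 := sq_lt_one_of_mem_Ioo hk
  have hq := abs_lamePot_two_le hk2 hsn
  have hφ := (isFloquetSolution_lameLambda₂ hk hsn).isHillSolution
  obtain ⟨c₁, hc₁, e₁⟩ := hψ.sturm_comparison hφ hq hne hμ h₁
  obtain ⟨c₂, hc₂, e₂⟩ := hψ.sturm_comparison hφ hq hne hμ h₂
  obtain ⟨c₃, hc₃, e₃⟩ := hψ.sturm_comparison hφ hq hne hμ h₃
  simp only [sn_eq_sin_am hk2 hsn] at e₁ e₂ e₃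
  exact sin_sq_ne_of_lt_of_lt (strictMono_am hk2 hsn (hc₁.2.trans hc₂.1))
    (strictMono_am hk2 hsn (hc₂.2.trans hc₃.1))
    (am_lt_am_add_pi hk2 hsn (by linarith [hc₃.2, hc₁.1])) (by linarith) (by linarith)

theorem isNodalInterval_or_exists {μ s a : ℝ} {ψ : ℝ → ℝ}
    (hψ : IsFloquetSolution (lamePot 2 k sn) (2 * ellK k) μ s ψ) (hμ : μ < lameLambda₂ k)
    (ha : ψ a = 0) :
    IsNodalInterval ψ a (a + 2 * ellK k) ∨
      ∃ z, IsNodalInterval ψ a z ∧ IsNodalInterval ψ z (a + 2 * ellK k) := by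
  have hk2 := sq_lt_one_of_mem_Ioo hk
  have hq := abs_lamePot_two_le hk2 hsn
  have hsol := hψ.isHillSolution
  have hT : ψ (a + 2 * ellK k) = 0 := by rw [hψ.2.2.2, ha, mul_zero]
  obtain ⟨z₁, hz₁, h₁⟩ := hsol.exists_isNodalInterval hq hψ.1 ha
    (by linarith [ellK_pos hk2]) hT
  rcases hz₁.eq_or_lt with rfl | hz₁
  · exact Or.inl h₁
  obtain ⟨z₂, hz₂, h₂⟩ := hsol.exists_isNodalInterval hq hψ.1 h₁.2.2.1 hz₁ hT
  rcases hz₂.eq_or_lt with rfl | hz₂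
  · exact Or.inr ⟨z₁, h₁, h₂⟩
  obtain ⟨z₃, hz₃, h₃⟩ := hsol.exists_isNodalInterval hq hψ.1 h₂.2.2.1 hz₂ hT
  exact (false_of_three_nodalIntervals hk hsn hsol hψ.1 hμ h₁ h₂ h₃ hz₃).elim

theorem isNodalInterval_of_antiperiodic {μ a : ℝ} {ψ : ℝ → ℝ}
    (hψ : IsFloquetSolution (lamePot 2 k sn) (2 * ellK k) μ (-1) ψ) (hμ : μ < lameLambda₂ k)
    (ha : ψ a = 0) : IsNodalInterval ψ a (a + 2 * ellK k) := by
  refine (isNodalInterval_or_exists hk hsn hψ hμ ha).resolve_right fun ⟨z, h₁, h₂⟩ => ?_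
  have hq := abs_lamePot_two_le (sq_lt_one_of_mem_Ioo hk) hsn
  have hsol := hψ.isHillSolution
  have d₁ := hsol.deriv_mul_deriv_neg hq hψ.1 h₁
  have d₂ := hsol.deriv_mul_deriv_neg hq hψ.1 h₂
  rw [hsol.deriv_add_eq_mul hψ.2.2.2] at d₂
  linarith

theorem exists_isNodalInterval_of_periodic {μ a : ℝ} {ψ : ℝ → ℝ}
    (hψ : IsFloquetSolution (lamePot 2 k sn) (2 * ellK k) μ 1 ψ) (hμ : μ < lameLambda₂ k)
    (ha : ψ a = 0) : ∃ z, IsNodalInterval ψ a z ∧ IsNodalInterval ψ z (a + 2 * ellK k) := by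
  refine (isNodalInterval_or_exists hk hsn hψ hμ ha).resolve_left fun h => ?_
  have hsol := hψ.isHillSolution
  have d := hsol.deriv_mul_deriv_neg (abs_lamePot_two_le (sq_lt_one_of_mem_Ioo hk) hsn) hψ.1 h
  rw [hsol.deriv_add_eq_mul hψ.2.2.2] at d
  nlinarith [sq_nonneg (deriv ψ a)]

theorem integral_mul_eq_zero_of_periodic {μ : ℝ} {ψ : ℝ → ℝ}
    (hψ : IsFloquetSolution (lamePot 2 k sn) (2 * ellK k) μ 1 ψ) (h₀ : μ ≠ lameLambda₀ k)
    (h₁ : μ ≠ 4 + k ^ 2) (h₂ : μ ≠ lameLambda₂ k) (a A B C : ℝ) :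
    ∫ x in a..a + 2 * ellK k, ψ x * (A * sn x ^ 2 - B * (sn x * cn k sn x) + C) = 0 := by
  have hk2 := sq_lt_one_of_mem_Ioo hk
  have hsol := hψ.isHillSolution
  have horth {ν : ℝ} {φ : ℝ → ℝ} (hφ : IsFloquetSolution (lamePot 2 k sn) (2 * ellK k) ν 1 φ)
      (hν : μ ≠ ν) : ∫ x in a..a + 2 * ellK k, ψ x * φ x = 0 :=
    hsol.integral_mul_eq_zero hφ.isHillSolution hν hψ.2.2.2 hφ.2.2.2 (mul_one 1) a
  obtain ⟨hΛ₀, h₀₁, h₁₂, h₂₃, h₃₄⟩ := lame_eigenvalues_lt hk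
  set c₀ := 2 / lameLambda₀ k
  set c₂ := 2 / lameLambda₂ k
  have hc : c₂ - c₀ ≠ 0 := (sub_neg.2 (div_lt_div_of_pos_left two_pos hΛ₀ (by linarith))).ne
  have hcomb : ∀ x, A * sn x ^ 2 - B * (sn x * cn k sn x) + C =
      1 * ((A * c₂ + C) / (c₂ - c₀) * (sn x ^ 2 - c₀) + -(A * c₀ + C) / (c₂ - c₀) *
        (sn x ^ 2 - c₂)) + -B * (sn x * cn k sn x) := fun x => by
    field_simp
    ring
  have hsn' := hsn.continuous
  have hcn := (contDiff_cn hk2 hsn).continuous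
  simp_rw [hcomb]
  exact integral_mul_add_mul_eq_zero hsol.continuous (by fun_prop) (by fun_prop)
    (integral_mul_add_mul_eq_zero hsol.continuous (by fun_prop) (by fun_prop)
      (horth (isFloquetSolution_lameLambda₀ hk hsn) h₀)
      (horth (isFloquetSolution_lameLambda₂ hk hsn) h₂) _ _)
    (horth (isFloquetSolution_sn_mul_cn hk2 hsn) h₁) _ _

theorem eq_or_eq_of_isPeriodicEV {μ : ℝ} (hev : IsPeriodicEV (lamePot 2 k sn) (2 * ellK k) μ)
    (hμ : μ < lameLambda₂ k) : μ = lameLambda₀ k ∨ μ = 4 + k ^ 2 := by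
  have hk2 := sq_lt_one_of_mem_Ioo hk
  by_contra! hμ'
  obtain ⟨ψ, hψ⟩ := hev
  have horth := integral_mul_eq_zero_of_periodic hk hsn hψ hμ'.1 hμ'.2 hμ.ne
  obtain ⟨a, ha⟩ := exists_eq_zero_of_integral_eq_zero hψ.isHillSolution.continuous
    (by linarith [ellK_pos hk2] : 0 < 0 + 2 * ellK k) (by simpa using horth 0 0 0 1)
  obtain ⟨z, h₁, h₂⟩ := exists_isNodalInterval_of_periodic hk hsn hψ hμ ha
  have hpos := integral_pos_of_two_nodalIntervals hk2 hsn hψ.isHillSolution hψ.1 h₁ h₂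
  simp_rw [sin_sub_mul_sin_sub, ← sn_eq_sin_am hk2 hsn, ← cn_eq_cos_am hk2 hsn] at hpos
  rw [intervalIntegral.integral_const_mul, horth, mul_zero] at hpos
  exact hpos.false

theorem eq_or_eq_of_isAntiperiodicEV {μ : ℝ}
    (hev : IsAntiperiodicEV (lamePot 2 k sn) (2 * ellK k) μ) (hμ : μ < lameLambda₂ k) :
    μ = 1 + k ^ 2 ∨ μ = 1 + 4 * k ^ 2 := by
  have hk2 := sq_lt_one_of_mem_Ioo hk
  by_contra! hμ'
  obtain ⟨ψ, hψ⟩ := hev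
  have hsol := hψ.isHillSolution
  obtain ⟨a, ha⟩ := exists_eq_zero_of_antiperiodic hsol.continuous hψ.2.2.2
  have hpos := integral_pos_of_nodalInterval hk2 hsn hsol hψ.1
    (isNodalInterval_of_antiperiodic hk hsn hψ hμ ha)
  have horth {ν : ℝ} {φ : ℝ → ℝ} (hφ : IsFloquetSolution (lamePot 2 k sn) (2 * ellK k) ν (-1) φ)
      (hν : μ ≠ ν) : ∫ x in a..a + 2 * ellK k, ψ x * φ x = 0 :=
    hsol.integral_mul_eq_zero hφ.isHillSolution hν hψ.2.2.2 hφ.2.2.2 (by norm_num) a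
  have hdn_sin : ∀ x, dn k sn x * sin (am k sn x - am k sn a) =
      cos (am k sn a) * (sn x * dn k sn x) + -sin (am k sn a) * deriv sn x := fun x => by
    rw [sin_sub, ← sn_eq_sin_am hk2 hsn x, ← cn_eq_cos_am hk2 hsn x, ← cn_mul_dn hk2 hsn]
    ring
  simp_rw [hdn_sin] at hpos
  rw [intervalIntegral.integral_const_mul, integral_mul_add_mul_eq_zero hsol.continuous
    (hsn.continuous.fun_mul (continuous_dn hk2 hsn)) hsn.contDiff_deriv.continuous
    (horth (isFloquetSolution_sn_mul_dn hk2 hsn) hμ'.2)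
    (horth (isFloquetSolution_deriv_sn hk2 hsn) hμ'.1), mul_zero] at hpos
  exact hpos.false

end Lame

/-! ## Interlaced enumerations -/

theorem monotone_of_interlacing {lam lam' : ℕ → ℝ}
    (hinter : ∀ n : ℕ, 1 ≤ n →
      lam (2 * n - 2) < lam' (2 * n - 1) ∧ lam' (2 * n - 1) ≤ lam' (2 * n) ∧
      lam' (2 * n) < lam (2 * n - 1) ∧ lam (2 * n - 1) ≤ lam (2 * n)) :
    Monotone lam ∧ Monotone fun j => lam' (j + 1) := by
  have h (n : ℕ) : lam (2 * n) < lam' (2 * n + 1) ∧ lam' (2 * n + 1) ≤ lam' (2 * n + 1 + 1) ∧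
      lam' (2 * n + 1 + 1) < lam (2 * n + 1) ∧ lam (2 * n + 1) ≤ lam (2 * n + 1 + 1) := by
    simpa [show 2 * (n + 1) - 2 = 2 * n by omega, show 2 * (n + 1) - 1 = 2 * n + 1 by omega,
      show 2 * (n + 1) = 2 * n + 1 + 1 by omega] using hinter (n + 1) (by omega)
  refine ⟨monotone_nat_of_le_succ fun m => ?_, monotone_nat_of_le_succ fun m => ?_⟩ <;>
    obtain ⟨t, rfl | rfl⟩ := Nat.even_or_odd' m
  · linarith [h t]
  · exact (h t).2.2.2
  · exact (h t).2.1
  · have h' := h (t + 1)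
    rw [show 2 * (t + 1) = 2 * t + 1 + 1 by ring] at h'
    linarith [h t]

theorem Monotone.le_of_eq_of_forall_lt_ne {f : ℕ → ℝ} (hf : Monotone f) {i j : ℕ} {x : ℝ}
    (hj : f j = x) (hne : ∀ l < i, f l ≠ x) : f i ≤ x :=
  hj ▸ hf (not_lt.1 fun hji => hne j hji hj)

theorem interlaced_spectra_eq {P A : ℝ → Prop} {lam lam' : ℕ → ℝ} {a₀ b₁ b₂ a₁ a₂ : ℝ}
    (hlt : a₀ < b₁ ∧ b₁ < b₂ ∧ b₂ < a₁ ∧ a₁ < a₂)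
    (hP : ∀ x, P x → x < a₂ → x = a₀ ∨ x = a₁) (hA : ∀ x, A x → x < a₂ → x = b₁ ∨ x = b₂)
    (ha : P a₀ ∧ P a₁ ∧ P a₂) (hb : A b₁ ∧ A b₂)
    (hper : ∀ j, P (lam j)) (hanti : ∀ j, 1 ≤ j → A (lam' j))
    (hper_all : ∀ x, P x → ∃ j, lam j = x) (hanti_all : ∀ x, A x → ∃ j, 1 ≤ j ∧ lam' j = x)
    (hinter : ∀ n : ℕ, 1 ≤ n →
      lam (2 * n - 2) < lam' (2 * n - 1) ∧ lam' (2 * n - 1) ≤ lam' (2 * n) ∧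
      lam' (2 * n) < lam (2 * n - 1) ∧ lam (2 * n - 1) ≤ lam (2 * n)) :
    lam 0 = a₀ ∧ lam' 1 = b₁ ∧ lam' 2 = b₂ ∧ lam 1 = a₁ ∧ lam 2 = a₂ := by
  obtain ⟨h₀₁, h₁₂, h₂₃, h₃₄⟩ := hlt
  obtain ⟨hmono, hmono'⟩ := monotone_of_interlacing hinter
  have hanti_all' (x : ℝ) (hx : A x) : ∃ j, lam' (j + 1) = x := by
    obtain ⟨j, hj, rfl⟩ := hanti_all x hx
    exact ⟨j - 1, by rw [Nat.sub_add_cancel hj]⟩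
  obtain ⟨i₁, i₂, i₃, i₄⟩ := hinter 1 le_rfl
  obtain ⟨i₅, i₆, i₇, -⟩ := hinter 2 (by norm_num)
  norm_num at i₁ i₂ i₃ i₄ i₅ i₆ i₇
  obtain ⟨j₀, hj₀⟩ := hper_all _ ha.1
  obtain ⟨j₁, hj₁⟩ := hper_all _ ha.2.1
  obtain ⟨j₂, hj₂⟩ := hper_all _ ha.2.2
  obtain ⟨j₁', hj₁'⟩ := hanti_all' _ hb.1
  obtain ⟨j₂', hj₂'⟩ := hanti_all' _ hb.2
  have e₀ : lam 0 = a₀ := by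
    have := hmono.le_of_eq_of_forall_lt_ne (i := 0) hj₀ (by simp)
    exact (hP _ (hper 0) (by linarith)).resolve_right (by linarith)
  have e₁' : lam' 1 = b₁ := by
    have := hmono'.le_of_eq_of_forall_lt_ne (i := 0) hj₁' (by simp)
    exact (hA _ (hanti 1 le_rfl) (by linarith)).resolve_right (by linarith)
  have e₁ : lam 1 = a₁ := by
    have := hmono.le_of_eq_of_forall_lt_ne (i := 1) hj₁ fun l hl h => by interval_cases l; linarith
    exact (hP _ (hper 1) (by linarith)).resolve_left (by linarith)
  have e₂' : lam' 2 = b₂ := by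
    refine (hA _ (hanti 2 (by norm_num)) (by linarith)).resolve_left fun e₂' => ?_
    have := hmono'.le_of_eq_of_forall_lt_ne (i := 2) hj₂' fun l hl h => by
      interval_cases l <;> simp only [zero_add, Nat.reduceAdd] at h <;> linarith
    simp only [Nat.reduceAdd] at this
    linarith
  refine ⟨e₀, e₁', e₂', e₁, ?_⟩
  have hle := hmono.le_of_eq_of_forall_lt_ne (i := 2) hj₂ fun l hl h => by
    interval_cases l <;> linarith
  refine hle.eq_or_lt.resolve_right fun hlt => ?_
  have e₂ := (hP _ (hper 2) hlt).resolve_left (by linarith)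
  have := hmono.le_of_eq_of_forall_lt_ne (i := 3) hj₂ fun l hl h => by
    interval_cases l <;> linarith
  rcases hA _ (hanti 3 (by norm_num)) (by linarith) with h | h <;> linarith

theorem lame_K11_determinant (k μ : ℝ) :
    lameL 2 k μ 0 * lameL 2 k μ 1 - 2 * lameP 2 k 0 * lameP 2 k (-1) =
      μ ^ 2 - 4 * (1 + k ^ 2) * μ + 12 * k ^ 2 := by
  simp only [lameL, lameP]; push_cast; ring

theorem lame_m2_gap_edges_general
    (k : ℝ) (hk : k ∈ Set.Ioo (0:ℝ) 1)
    (sn : ℝ → ℝ) (hsn : IsJacobiSn k sn)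
    (lam lam' : ℕ → ℝ)
    -- λⱼ are 2K-periodic eigenvalues, λ'ⱼ (j ≥ 1) are 2K-antiperiodic ones
    (hper : ∀ j : ℕ, IsPeriodicEV (lamePot 2 k sn) (2 * ellK k) (lam j))
    (hanti : ∀ j : ℕ, 1 ≤ j →
      IsAntiperiodicEV (lamePot 2 k sn) (2 * ellK k) (lam' j))
    -- they enumerate the whole periodic and antiperiodic spectra
    (hper_all : ∀ x : ℝ, IsPeriodicEV (lamePot 2 k sn) (2 * ellK k) x →
      ∃ j, lam j = x)
    (hanti_all : ∀ x : ℝ, IsAntiperiodicEV (lamePot 2 k sn) (2 * ellK k) x →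
      ∃ j, 1 ≤ j ∧ lam' j = x)
    -- interlacing (oscillation theorem)
    (hinter : ∀ n : ℕ, 1 ≤ n →
      lam (2 * n - 2) < lam' (2 * n - 1) ∧ lam' (2 * n - 1) ≤ lam' (2 * n) ∧
      lam' (2 * n) < lam (2 * n - 1) ∧ lam (2 * n - 1) ≤ lam (2 * n)) :
    -- edges of the first spectral gap
    lam' 1 = 1 + k ^ 2 ∧ lam' 2 = 1 + 4 * k ^ 2 ∧
    -- edges of the second spectral gap
    lam 1 = 4 + k ^ 2 ∧
    lam 2 = 2 * (1 + k ^ 2 + Real.sqrt (1 - k ^ 2 + k ^ 4)) ∧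
    -- bottom of the spectrum
    lam 0 = 2 * (1 + k ^ 2 - Real.sqrt (1 - k ^ 2 + k ^ 4)) ∧
    -- these are exactly the roots of the corresponding determinants:
    lamePs 2 k 0 + lameLs 2 k (lam' 1) 0 = 0 ∧
    -lamePs 2 k 0 + lameLs 2 k (lam' 2) 0 = 0 ∧
    lameL 2 k (lam 1) 1 = 0 ∧
    lameL 2 k (lam 2) 0 * lameL 2 k (lam 2) 1
      - 2 * lameP 2 k 0 * lameP 2 k (-1) = 0 ∧
    lameL 2 k (lam 0) 0 * lameL 2 k (lam 0) 1
      - 2 * lameP 2 k 0 * lameP 2 k (-1) = 0 := by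
  have hk2 := sq_lt_one_of_mem_Ioo hk
  obtain ⟨-, h₀₁, h₁₂, h₂₃, h₃₄⟩ := lame_eigenvalues_lt hk
  obtain ⟨e₀, e₁', e₂', e₁, e₂⟩ := interlaced_spectra_eq ⟨h₀₁, h₁₂, h₂₃, h₃₄⟩
    (fun _ => Lame.eq_or_eq_of_isPeriodicEV hk hsn)
    (fun _ => Lame.eq_or_eq_of_isAntiperiodicEV hk hsn)
    ⟨⟨_, Lame.isFloquetSolution_lameLambda₀ hk hsn⟩, ⟨_, Lame.isFloquetSolution_sn_mul_cn hk2 hsn⟩,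
      ⟨_, Lame.isFloquetSolution_lameLambda₂ hk hsn⟩⟩
    ⟨⟨_, Lame.isFloquetSolution_deriv_sn hk2 hsn⟩, ⟨_, Lame.isFloquetSolution_sn_mul_dn hk2 hsn⟩⟩
    hper hanti hper_all hanti_all hinter
  refine ⟨e₁', e₂', e₁, e₂, e₀, ?_, ?_, ?_, ?_, ?_⟩
  · rw [e₁']; norm_num [lamePs, lameLs]; ring
  · rw [e₂']; norm_num [lamePs, lameLs]; ring
  · rw [e₁]; norm_num [lameL]; ring
  · rw [lame_K11_determinant, e₂]; exact lameLambda₂_isRoot k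
  · rw [lame_K11_determinant, e₀]; exact lameLambda₀_isRoot k

/-- For the Lamé operator `L₂ = -d²/dx² + 6k² sn²(x,k)` with
`0 < k < 1`, given the oscillation-theorem enumeration
`λ₀ < λ'₁ ≤ λ'₂ < λ₁ ≤ λ₂ < ⋯` of its periodic (`λⱼ`) and antiperiodic (`λ'ⱼ`)
spectra, the edges of the first gap are `λ'₁ = 1 + k²`, `λ'₂ = 1 + 4k²` (the
roots of `δ*_{1,1} = P*(0)+Λ*₀` and `δ*_{1,2} = -P*(0)+Λ*₀`), the edges of the
second gap are `λ₁ = 4 + k²` (the root of `Λ₁`) and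
`λ₂ = 2(1 + k² + √(1-k²+k⁴))`, and the bottom of the spectrum is
`λ₀ = 2(1 + k² - √(1-k²+k⁴))` (the roots of `Λ₀Λ₁ - 2P(0)P(-1)`). -/
theorem lame_m2_gap_edges
    (k : ℝ) (hk : k ∈ Set.Ioo (0:ℝ) 1)
    (sn : ℝ → ℝ) (hsn : IsJacobiSn k sn)
    (lam lam' : ℕ → ℝ)
    -- λⱼ are 2K-periodic eigenvalues, λ'ⱼ (j ≥ 1) are 2K-antiperiodic ones
    (hper : ∀ j : ℕ, IsPeriodicEV (lamePot 2 k sn) (2 * ellK k) (lam j))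
    (hanti : ∀ j : ℕ, 1 ≤ j →
      IsAntiperiodicEV (lamePot 2 k sn) (2 * ellK k) (lam' j))
    -- they enumerate the whole periodic and antiperiodic spectra
    (hper_all : ∀ x : ℝ, IsPeriodicEV (lamePot 2 k sn) (2 * ellK k) x →
      ∃ j, lam j = x)
    (hanti_all : ∀ x : ℝ, IsAntiperiodicEV (lamePot 2 k sn) (2 * ellK k) x →
      ∃ j, 1 ≤ j ∧ lam' j = x)
    -- interlacing (oscillation theorem)
    (hinter : ∀ n : ℕ, 1 ≤ n →
      lam (2 * n - 2) < lam' (2 * n - 1) ∧ lam' (2 * n - 1) ≤ lam' (2 * n) ∧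
      lam' (2 * n) < lam (2 * n - 1) ∧ lam (2 * n - 1) ≤ lam (2 * n))
    (htend : Filter.Tendsto lam Filter.atTop Filter.atTop) :
    -- edges of the first spectral gap
    lam' 1 = 1 + k ^ 2 ∧ lam' 2 = 1 + 4 * k ^ 2 ∧
    -- edges of the second spectral gap
    lam 1 = 4 + k ^ 2 ∧
    lam 2 = 2 * (1 + k ^ 2 + Real.sqrt (1 - k ^ 2 + k ^ 4)) ∧
    -- bottom of the spectrum
    lam 0 = 2 * (1 + k ^ 2 - Real.sqrt (1 - k ^ 2 + k ^ 4)) ∧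
    -- these are exactly the roots of the corresponding determinants:
    lamePs 2 k 0 + lameLs 2 k (lam' 1) 0 = 0 ∧
    -lamePs 2 k 0 + lameLs 2 k (lam' 2) 0 = 0 ∧
    lameL 2 k (lam 1) 1 = 0 ∧
    lameL 2 k (lam 2) 0 * lameL 2 k (lam 2) 1
      - 2 * lameP 2 k 0 * lameP 2 k (-1) = 0 ∧
    lameL 2 k (lam 0) 0 * lameL 2 k (lam 0) 1
      - 2 * lameP 2 k 0 * lameP 2 k (-1) = 0 :=
  lame_m2_gap_edges_general k hk sn hsn lam lam' hper hanti hper_all hanti_all hinter
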